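/- arXiv:math/0602556 — 6 statements merged into one kernel-verified Lean document; each statement's English description precedes it below -/
import Mathlib

section
/- Let g : ℝ → ℝ be a convex function such that the limit g(-∞) := lim_{x→-∞} g(x) exists and is finite. Then the right derivative g' of g satisfies g'(x) → 0 as x → -∞. -/
/-!
The right derivative of a convex function at `x` lies between the slopes of the chords
`[x - 1, x]` and `[x, x + 1]`. Both chord slopes are differences `g (x ± 1) - g x` of values that
converge to the same finite limit, so they tend to `0`, and the right derivative is squeezed.
-/

open Filter Set Topology

lemma tendsto_slope_add_atBot {E : Type*} [NormedAddCommGroup E] [NormedSpace ℝ E]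
    {f : ℝ → E} {L : E} (hf : Tendsto f atBot (𝓝 L)) (h : ℝ) :
    Tendsto (fun x => slope f x (x + h)) atBot (𝓝 0) := by
  have hshift : Tendsto (fun x => f (x + h)) atBot (𝓝 L) :=
    hf.comp (tendsto_atBot_add_const_right _ h tendsto_id)
  simpa [slope_def_module] using (hshift.sub hf).const_smul h⁻¹

lemma ConvexOn.slope_le_rightDeriv_of_mem_interior {S : Set ℝ} {f : ℝ → ℝ} {x y : ℝ}
    (hf : ConvexOn ℝ S f) (hy : y ∈ S) (hx : x ∈ interior S) (hyx : y < x) :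
    slope f y x ≤ derivWithin f (Ioi x) x :=
  (hf.slope_le_leftDeriv_of_mem_interior hy hx hyx).trans
    (hf.leftDeriv_le_rightDeriv_of_mem_interior hx)

/-- If `g : ℝ → ℝ` is convex and has a finite limit `L` as `x → -∞`, then its
right derivative tends to `0` as `x → -∞`. -/
theorem rightDeriv_tendsto_zero_atBot (g : ℝ → ℝ) (hg : ConvexOn ℝ Set.univ g)
    (L : ℝ) (hlim : Tendsto g atBot (nhds L)) :
    Tendsto (fun x => derivWithin g (Set.Ioi x) x) atBot (nhds 0) := by
  have hx : ∀ x : ℝ, x ∈ interior univ := fun x => by simp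
  have hlower : ∀ x, slope g x (x + -1) ≤ derivWithin g (Ioi x) x := fun x => by
    rw [slope_comm]
    exact hg.slope_le_rightDeriv_of_mem_interior (mem_univ _) (hx x) (by linarith)
  have hupper : ∀ x, derivWithin g (Ioi x) x ≤ slope g x (x + 1) := fun x =>
    hg.rightDeriv_le_slope_of_mem_interior (hx x) (mem_univ _) (lt_add_one x)
  exact tendsto_of_tendsto_of_tendsto_of_le_of_le (tendsto_slope_add_atBot hlim (-1))
    (tendsto_slope_add_atBot hlim 1) hlower hupper
end

section
/- For any m ≥ 1, the function θ ↦ cos(θ)^(2/m) + sin(θ)^(2/m) is nondecreasing on [0, π/4]. -/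
open Real

/-- For `m ≥ 1`, `θ ↦ cos θ ^ (2/m) + sin θ ^ (2/m)` is nondecreasing on `[0, π/4]`. -/
theorem monotoneOn_cos_sin_rpow (m : ℝ) (hm : 1 ≤ m) :
    MonotoneOn (fun θ : ℝ => Real.cos θ ^ (2 / m) + Real.sin θ ^ (2 / m))
      (Set.Icc 0 (Real.pi / 4)) := by
  set p := 2 / m with hp
  have hm0 : (0:ℝ) < m := lt_of_lt_of_le one_pos hm
  have hp0 : 0 < p := by positivity
  have hp2 : p ≤ 2 := by rw [hp, div_le_iff₀ hm0]; linarith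
  have hcont : Continuous fun x : ℝ => x ^ p := by
    rw [continuous_iff_continuousAt]
    intro x
    exact Real.continuousAt_rpow_const x p (Or.inr hp0.le)
  have hderiv : ∀ x ∈ Set.Ioo (0:ℝ) (Real.pi / 4),
      HasDerivAt (fun θ : ℝ => Real.cos θ ^ p + Real.sin θ ^ p)
        (-Real.sin x * p * Real.cos x ^ (p-1) + Real.cos x * p * Real.sin x ^ (p-1)) x := by
    intro x hx
    have hpi := Real.pi_pos
    have hsin : 0 < Real.sin x := Real.sin_pos_of_pos_of_lt_pi hx.1 (by linarith [hx.2])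
    have hcos : 0 < Real.cos x := Real.cos_pos_of_mem_Ioo ⟨by linarith [hx.1], by linarith [hx.2]⟩
    exact ((Real.hasDerivAt_cos x).rpow_const (Or.inl hcos.ne')).add
      ((Real.hasDerivAt_sin x).rpow_const (Or.inl hsin.ne'))
  apply monotoneOn_of_deriv_nonneg (convex_Icc _ _)
  · exact ((hcont.comp Real.continuous_cos).add (hcont.comp Real.continuous_sin)).continuousOn
  · rw [interior_Icc]
    intro x hx
    exact (hderiv x hx).differentiableAt.differentiableWithinAt
  · rw [interior_Icc]
    intro x hx
    rw [(hderiv x hx).deriv]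
    have hpi := Real.pi_pos
    have hsin : 0 < Real.sin x := Real.sin_pos_of_pos_of_lt_pi hx.1 (by linarith [hx.2])
    have hcos : 0 < Real.cos x := Real.cos_pos_of_mem_Ioo ⟨by linarith [hx.1], by linarith [hx.2]⟩
    have hsc : Real.sin x ≤ Real.cos x := by
      rw [← Real.cos_pi_div_two_sub]
      exact Real.cos_le_cos_of_nonneg_of_le_pi hx.1.le (by linarith [hx.1]) (by linarith [hx.2])
    have key : Real.sin x ^ (2-p) ≤ Real.cos x ^ (2-p) :=
      Real.rpow_le_rpow hsin.le hsc (by linarith)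
    have hmul := mul_le_mul_of_nonneg_right key
      (by positivity : (0:ℝ) ≤ Real.sin x ^ (p-1) * Real.cos x ^ (p-1))
    have e1 : Real.sin x ^ (2-p) * (Real.sin x ^ (p-1) * Real.cos x ^ (p-1))
        = Real.sin x * Real.cos x ^ (p-1) := by
      rw [← mul_assoc, ← Real.rpow_add hsin, show (2-p)+(p-1) = 1 by ring, Real.rpow_one]
    have e2 : Real.cos x ^ (2-p) * (Real.sin x ^ (p-1) * Real.cos x ^ (p-1))
        = Real.cos x * Real.sin x ^ (p-1) := by
      rw [mul_comm (Real.sin x ^ (p-1)), ← mul_assoc, ← Real.rpow_add hcos,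
        show (2-p)+(p-1) = 1 by ring, Real.rpow_one]
    rw [e1, e2] at hmul
    nlinarith [hmul, hp0.le]
end

section
/- Let X be a random variable with E X ≤ 0 and -a ≤ X ≤ b almost surely, where a, b > 0. Let BS have the standardized Bernoulli distribution with parameter p = a/(a+b), i.e., P(BS = √(q/p)) = p = 1 - P(BS = -√(p/q)) with q = 1 - p. Then for every nondecreasing convex function f : ℝ → ℝ, E f(X) ≤ E f(√(ab) · BS). -/
/-!
On `[-a, b]` the convex function `f` lies below its chord, so `E f(X)` is at most the chord
evaluated at `E X`; since `f` is nondecreasing the chord is nondecreasing, hence at most its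
value at `0`. That value is `p f(b) + q f(-a)`, the expectation of `f` under the two-point law of
mean zero on `{-a, b}`, which is exactly the law of `√(ab) · BS`.
-/

open MeasureTheory Set

theorem ConvexOn.mul_le_of_mem_Icc {𝕜 : Type*} [Field 𝕜] [LinearOrder 𝕜] [IsStrictOrderedRing 𝕜]
    {s : Set 𝕜} {f : 𝕜 → 𝕜} (hf : ConvexOn 𝕜 s f) {x y z : 𝕜} (hx : x ∈ s) (hz : z ∈ s)
    (hy : y ∈ Icc x z) : (z - x) * f y ≤ (z - y) * f x + (y - x) * f z := by
  rcases hy.1.eq_or_lt with rfl | hxy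
  · simp
  rcases hy.2.eq_or_lt with rfl | hyz
  · simp
  exact hf.secant_mono_aux1 hx hz hxy hyz

theorem Monotone.integrable_comp_of_ae_mem_Icc {Ω : Type*} [MeasurableSpace Ω] {μ : Measure Ω}
    [IsFiniteMeasure μ] {f : ℝ → ℝ} (hf : Monotone f) {X : Ω → ℝ} (hX : AEMeasurable X μ)
    {u v : ℝ} (hXuv : ∀ᵐ ω ∂μ, X ω ∈ Icc u v) : Integrable (fun ω ↦ f (X ω)) μ := by
  refine .of_bound (hf.measurable.comp_aemeasurable hX).aestronglyMeasurable
    (max |f u| |f v|) ?_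
  filter_upwards [hXuv] with ω hω
  exact abs_le_max_abs_abs (hf hω.1) (hf hω.2)

/-- The Edmundson–Madansky inequality. -/
theorem ConvexOn.mul_integral_comp_le_of_ae_mem_Icc {Ω : Type*} [MeasurableSpace Ω]
    {μ : Measure Ω} [IsProbabilityMeasure μ] {s : Set ℝ} {f : ℝ → ℝ} (hf : ConvexOn ℝ s f)
    {X : Ω → ℝ} {u v : ℝ} (hu : u ∈ s) (hv : v ∈ s) (hXuv : ∀ᵐ ω ∂μ, X ω ∈ Icc u v)
    (hX : Integrable X μ) (hfX : Integrable (fun ω ↦ f (X ω)) μ) :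
    (v - u) * ∫ ω, f (X ω) ∂μ ≤ (v - ∫ ω, X ω ∂μ) * f u + (∫ ω, X ω ∂μ - u) * f v := by
  have hchord : Integrable (fun ω ↦ (v * f u - u * f v) + (f v - f u) * X ω) μ :=
    (integrable_const _).add (hX.const_mul _)
  calc (v - u) * ∫ ω, f (X ω) ∂μ = ∫ ω, (v - u) * f (X ω) ∂μ := (integral_const_mul _ _).symm
    _ ≤ ∫ ω, (v * f u - u * f v) + (f v - f u) * X ω ∂μ := by
      refine integral_mono_ae (hfX.const_mul _) hchord ?_
      filter_upwards [hXuv] with ω hω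
      linarith [hf.mul_le_of_mem_Icc hu hv hω]
    _ = (v - ∫ ω, X ω ∂μ) * f u + (∫ ω, X ω ∂μ - u) * f v := by
      rw [integral_add (integrable_const _) (hX.const_mul _), integral_const, integral_const_mul]
      simp only [probReal_univ, one_smul]
      ring

theorem Real.sqrt_mul_mul_sqrt_div_self {a b : ℝ} (ha : 0 < a) (hb : 0 ≤ b) :
    √(a * b) * √(b / a) = b := by
  rw [← Real.sqrt_mul (by positivity), show a * b * (b / a) = b ^ 2 by field_simp,
    Real.sqrt_sq hb]

/-- If `E X ≤ 0` and `-a ≤ X ≤ b` a.s. (`a, b > 0`), then for any nondecreasing convex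
`f`, `E f(X) ≤ E f(√(ab)·BS)` where `BS ∼ BS(p)` with `p = a/(a+b)`, `q = 1 - p`. -/
theorem expectation_le_standardized_bernoulli
    {Ω : Type*} [MeasurableSpace Ω] (μ : Measure Ω) [IsProbabilityMeasure μ]
    (X : Ω → ℝ) (hXm : Measurable X)
    (a b : ℝ) (ha : 0 < a) (hb : 0 < b)
    (hbd : ∀ᵐ ω ∂μ, -a ≤ X ω ∧ X ω ≤ b)
    (hmean : ∫ ω, X ω ∂μ ≤ 0)
    (f : ℝ → ℝ) (hf_mono : Monotone f) (hf_conv : ConvexOn ℝ Set.univ f) :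
    ∫ ω, f (X ω) ∂μ ≤
      (a / (a + b)) * f (Real.sqrt (a * b) * Real.sqrt ((1 - a / (a + b)) / (a / (a + b))))
        + (1 - a / (a + b)) *
            f (Real.sqrt (a * b) * (-Real.sqrt ((a / (a + b)) / (1 - a / (a + b))))) := by
  have hab : 0 < a + b := by linarith
  have hq : 1 - a / (a + b) = b / (a + b) := by rw [one_sub_div hab.ne', add_sub_cancel_left]
  rw [hq, div_div_div_cancel_right₀ hab.ne', div_div_div_cancel_right₀ hab.ne',
    Real.sqrt_mul_mul_sqrt_div_self ha hb.le, mul_neg, mul_comm a b,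
    Real.sqrt_mul_mul_sqrt_div_self hb ha.le]
  have hX : Integrable X μ := monotone_id.integrable_comp_of_ae_mem_Icc hXm.aemeasurable hbd
  have hchord := hf_conv.mul_integral_comp_le_of_ae_mem_Icc (mem_univ (-a)) (mem_univ b) hbd hX
    (hf_mono.integrable_comp_of_ae_mem_Icc hXm.aemeasurable hbd)
  have hslope : (∫ ω, X ω ∂μ) * (f b - f (-a)) ≤ 0 :=
    mul_nonpos_of_nonpos_of_nonneg hmean (sub_nonneg.2 (hf_mono (by linarith)))
  rw [div_mul_eq_mul_div, div_mul_eq_mul_div, ← add_div, le_div_iff₀ hab]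
  linarith
end

section
/- For p ∈ (0,1), let BS(p) denote the standardized Bernoulli random variable taking value √(q/p) with probability p and -√(p/q) with probability q = 1-p. Then for every fixed t ∈ ℝ, the function p ↦ E (BS(p) - t)₊² is nonincreasing on (0,1). -/
/-!
Put `s = √(q/p)`, which decreases in `p`; then `p = 1/(1+s²)`, `√(p/q) = 1/s` and
`E (BS(p) - t)₊² = ((s - t)₊² + (-1 - t s)₊²) / (1 + s²)`.
Since `x₊² ≤ x²`, this never exceeds the full second moment `E (BS(p) - t)² = 1 + t²`,
and it equals it when `1 + t s < 0` (both atoms lie above `t`). When `1 + t s ≥ 0` only the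
upper atom contributes, and `(s - t)₊² / (1 + s²)` is nondecreasing in `s` on that range.
-/

open Real Set

/-- `E (BS(p) - t)₊²` written in terms of `s = √(q/p)`. -/
noncomputable def posPartMomentOfRatio (t s : ℝ) : ℝ :=
  ((max (s - t) 0) ^ 2 + (max (-1 - t * s) 0) ^ 2) / (1 + s ^ 2)

lemma sq_max_zero_le_sq (x : ℝ) : max x 0 ^ 2 ≤ x ^ 2 := by
  rcases le_total x 0 with h | h
  · rw [max_eq_right h]; simpa using sq_nonneg x
  · rw [max_eq_left h]

namespace posPartMomentOfRatio

variable {t s : ℝ}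

lemma le_one_add_sq : posPartMomentOfRatio t s ≤ 1 + t ^ 2 := by
  rw [posPartMomentOfRatio, div_le_iff₀ (by positivity)]
  nlinarith [sq_max_zero_le_sq (s - t), sq_max_zero_le_sq (-1 - t * s)]

lemma eq_one_add_sq (hs : 0 ≤ s) (h : 1 + t * s < 0) : posPartMomentOfRatio t s = 1 + t ^ 2 := by
  have ht : t < 0 := by nlinarith
  rw [posPartMomentOfRatio, max_eq_left (by linarith), max_eq_left (by linarith),
    div_eq_iff (by positivity)]
  ring

lemma eq_sq_max_sub_div (h : 0 ≤ 1 + t * s) :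
    posPartMomentOfRatio t s = max (s - t) 0 ^ 2 / (1 + s ^ 2) := by
  rw [posPartMomentOfRatio, max_eq_right (by linarith : -1 - t * s ≤ 0)]
  ring

end posPartMomentOfRatio

lemma sq_max_sub_div_one_add_sq_le {t s₁ s₂ : ℝ} (h : s₁ ≤ s₂)
    (h₁ : 0 ≤ 1 + t * s₁) (h₂ : 0 ≤ 1 + t * s₂) :
    max (s₁ - t) 0 ^ 2 / (1 + s₁ ^ 2) ≤ max (s₂ - t) 0 ^ 2 / (1 + s₂ ^ 2) := by
  rw [div_le_div_iff₀ (by positivity) (by positivity)]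
  rcases le_total (s₁ - t) 0 with ht | ht
  · rw [max_eq_right ht, zero_pow two_ne_zero, zero_mul]; positivity
  rw [max_eq_left ht, max_eq_left (by linarith)]
  have key : (s₂ - t) ^ 2 * (1 + s₁ ^ 2) - (s₁ - t) ^ 2 * (1 + s₂ ^ 2)
      = (s₂ - s₁) * ((1 + t * s₁) * (s₂ - t) + (1 + t * s₂) * (s₁ - t)) := by ring
  have : 0 ≤ (s₂ - s₁) * ((1 + t * s₁) * (s₂ - t) + (1 + t * s₂) * (s₁ - t)) :=
    mul_nonneg (sub_nonneg.2 h)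
      (add_nonneg (mul_nonneg h₁ (by linarith)) (mul_nonneg h₂ ht))
  linarith

lemma posPartMomentOfRatio_monotoneOn (t : ℝ) : MonotoneOn (posPartMomentOfRatio t) (Ici 0) := by
  intro s₁ hs₁ s₂ hs₂ h
  rcases lt_or_ge (1 + t * s₂) 0 with h₂ | h₂
  · rw [posPartMomentOfRatio.eq_one_add_sq hs₂ h₂]
    exact posPartMomentOfRatio.le_one_add_sq
  -- `1 + t s₁` lies between `1` and `1 + t s₂`
  have h₁ : 0 ≤ 1 + t * s₁ := by
    rcases le_total 0 t with ht | ht <;> nlinarith [mem_Ici.1 hs₁]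
  rw [posPartMomentOfRatio.eq_sq_max_sub_div h₁, posPartMomentOfRatio.eq_sq_max_sub_div h₂]
  exact sq_max_sub_div_one_add_sq_le h h₁ h₂

lemma sqrt_one_sub_div_antitoneOn : AntitoneOn (fun p : ℝ => √((1 - p) / p)) (Ioi 0) := by
  intro p₁ hp₁ p₂ hp₂ h
  apply sqrt_le_sqrt
  rw [div_le_div_iff₀ hp₂ hp₁]
  nlinarith

lemma bernoulli_moment_eq_posPartMomentOfRatio {p : ℝ} (t : ℝ) (hp : p ∈ Ioo 0 1) :
    p * (max (√((1 - p) / p) - t) 0) ^ 2 + (1 - p) * (max (-√(p / (1 - p)) - t) 0) ^ 2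
      = posPartMomentOfRatio t √((1 - p) / p) := by
  obtain ⟨hp0, hp1⟩ := hp
  set s := √((1 - p) / p)
  have hq : 0 < 1 - p := by linarith
  have hs : 0 < s := sqrt_pos.2 (div_pos hq hp0)
  have hs2 : s ^ 2 = (1 - p) / p := sq_sqrt (div_pos hq hp0).le
  have hinv : √(p / (1 - p)) = s⁻¹ := by rw [← sqrt_inv, inv_div]
  have hlower : max (-√(p / (1 - p)) - t) 0 = s⁻¹ * max (-1 - t * s) 0 := by
    rw [hinv, mul_max_of_nonneg _ _ (inv_nonneg.2 hs.le), mul_zero]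
    congr 1
    field_simp
  rw [hlower, posPartMomentOfRatio, eq_div_iff (by positivity), mul_pow, inv_pow, hs2]
  field_simp
  ring

/-- For each fixed `t`, the map `p ↦ E (BS(p) - t)₊²` is nonincreasing on `(0,1)`,
where `BS(p)` takes value `√((1-p)/p)` with probability `p` and `-√(p/(1-p))`
with probability `1-p`. -/
theorem bernoulli_moment_antitone (t : ℝ) :
    AntitoneOn
      (fun p : ℝ =>
        p * (max (Real.sqrt ((1 - p) / p) - t) 0) ^ 2
          + (1 - p) * (max (-Real.sqrt (p / (1 - p)) - t) 0) ^ 2)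
      (Set.Ioo 0 1) := by
  have hmono : AntitoneOn (posPartMomentOfRatio t ∘ fun p : ℝ => √((1 - p) / p)) (Ioo 0 1) :=
    (posPartMomentOfRatio_monotoneOn t).comp_AntitoneOn
      (sqrt_one_sub_div_antitoneOn.mono Ioo_subset_Ioi_self) fun p _ => sqrt_nonneg _
  exact hmono.congr fun p hp => (bernoulli_moment_eq_posPartMomentOfRatio t hp).symm
end

section
/- Define m_*(p) := (1 + p + 2p²)/(2(√(p - p²) + 2p²)) for 0 < p ≤ 1/2 and m_*(p) := 1 for 1/2 ≤ p < 1; and p_*(m) := (2m+1 - √(4(m-1)(m+2)+1))/(4(2m-1)) for m ≥ 1. Then for all p ∈ (0,1) and m ≥ 1, one has m ≥ m_*(p) if and only if p ≥ p_*(m). -/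
open Real

noncomputable def mStar (p : ℝ) : ℝ :=
  if p ≤ 1 / 2 then (1 + p + 2 * p ^ 2) / (2 * (Real.sqrt (p - p ^ 2) + 2 * p ^ 2)) else 1

noncomputable def pStar (m : ℝ) : ℝ :=
  (2 * m + 1 - Real.sqrt (4 * (m - 1) * (m + 2) + 1)) / (4 * (2 * m - 1))

private lemma le_sqrt_iff_aux {c D : ℝ} (hD : 0 ≤ D) :
    c ≤ Real.sqrt D ↔ c ≤ 0 ∨ c ^ 2 ≤ D := by
  constructor
  · intro h
    rcases le_or_gt c 0 with h0 | h0
    · exact Or.inl h0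
    · refine Or.inr ?_
      have h2 := Real.sq_sqrt hD
      nlinarith [Real.sqrt_nonneg D]
  · rintro (h0 | h2)
    · exact h0.trans (Real.sqrt_nonneg D)
    · rcases le_or_gt c 0 with h0 | h0
      · exact h0.trans (Real.sqrt_nonneg D)
      · have := Real.sqrt_le_sqrt h2
        rwa [Real.sqrt_sq h0.le] at this

/-- For `p ∈ (0,1)` and `m ≥ 1`: `m ≥ m_*(p) ↔ p ≥ p_*(m)`. -/
theorem mStar_le_iff_pStar_le (p m : ℝ) (hp : p ∈ Set.Ioo (0 : ℝ) 1) (hm : 1 ≤ m) :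
    mStar p ≤ m ↔ pStar m ≤ p := by
  obtain ⟨hp0, hp1⟩ := hp
  have hD0 : (0:ℝ) ≤ 4 * (m - 1) * (m + 2) + 1 := by nlinarith
  have hden : (0:ℝ) < 4 * (2 * m - 1) := by linarith
  have hps : pStar m ≤ p ↔
      2 * m + 1 - 4 * (2 * m - 1) * p ≤ Real.sqrt (4 * (m - 1) * (m + 2) + 1) := by
    rw [pStar, div_le_iff₀ hden]
    constructor <;> intro h <;> linarith
  rw [hps, le_sqrt_iff_aux hD0]
  by_cases hple : p ≤ 1 / 2
  · have hQiff : (2 * m + 1 - 4 * (2 * m - 1) * p ≤ 0 ∨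
        (2 * m + 1 - 4 * (2 * m - 1) * p) ^ 2 ≤ 4 * (m - 1) * (m + 2) + 1) ↔
        2 * (2 * m - 1) ^ 2 * p ^ 2 - (4 * m ^ 2 - 1) * p + 1 ≤ 0 := by
      constructor
      · rintro (h | h)
        · nlinarith [mul_nonneg (by linarith : (0:ℝ) ≤ 4 * (2 * m - 1) * p - (2 * m + 1))
            (by linarith : (0:ℝ) ≤ 1 - 2 * p), sq_nonneg (2 * m - 3)]
        · nlinarith
      · intro h
        right
        nlinarith
    rw [hQiff]
    rw [mStar, if_pos hple]
    have hpp : (0:ℝ) < p - p ^ 2 := by nlinarith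
    have hs0 : 0 < Real.sqrt (p - p ^ 2) := Real.sqrt_pos.mpr hpp
    have hs2 : Real.sqrt (p - p ^ 2) ^ 2 = p - p ^ 2 := Real.sq_sqrt hpp.le
    set s := Real.sqrt (p - p ^ 2) with hsdef
    have hdpos : 0 < 2 * (s + 2 * p ^ 2) := by positivity
    rw [div_le_iff₀ hdpos]
    constructor
    · intro h
      rcases le_or_gt (1 + p + 2 * p ^ 2 - 4 * m * p ^ 2) 0 with h0 | h0
      · -- A ≤ 4 m p² forces Q ≤ 0
        nlinarith [mul_nonneg (by linarith : (0:ℝ) ≤ 4 * m * p ^ 2 - (1 + p + 2 * p ^ 2))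
            (by linarith : (0:ℝ) ≤ 1 - 2 * p), mul_pos hp0 hp0, sq_nonneg p,
            mul_pos (mul_pos hp0 hp0) hp0]
      · have hle : 1 + p + 2 * p ^ 2 - 4 * m * p ^ 2 ≤ 2 * m * s := by nlinarith
        have hsq : (1 + p + 2 * p ^ 2 - 4 * m * p ^ 2) ^ 2 ≤ (2 * m * s) ^ 2 := by
          nlinarith [mul_pos (by linarith : (0:ℝ) < 2 * m) hs0]
        nlinarith [hs2, sq_nonneg s]
    · intro hQ
      have h1 : (1 + p + 2 * p ^ 2 - 4 * m * p ^ 2) ^ 2 ≤ (2 * m * s) ^ 2 := by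
        nlinarith [hs2]
      have h2 : 1 + p + 2 * p ^ 2 - 4 * m * p ^ 2 ≤ 2 * m * s := by
        nlinarith [mul_pos (by linarith : (0:ℝ) < 2 * m) hs0,
          sq_nonneg (1 + p + 2 * p ^ 2 - 4 * m * p ^ 2 + 2 * m * s)]
      nlinarith
  · push_neg at hple
    rw [mStar, if_neg (not_le.mpr hple)]
    constructor
    · intro _
      rcases le_or_gt (2 * m + 1 - 4 * (2 * m - 1) * p) 0 with h | h
      · exact Or.inl h
      · refine Or.inr ?_
        nlinarith [mul_pos (by linarith : (0:ℝ) < 2 * m - 1) (by linarith : (0:ℝ) < 2 * p - 1)]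
    · intro _
      exact hm
end

section
/- Let f : ℝ → ℝ satisfy: f and f'' are nondecreasing and convex (f twice continuously differentiable). Then either f(x) = O(x) as x → +∞, or liminf_{x→+∞} f(x)/x² > 0 (possibly +∞). -/
open Filter Asymptotics Topology Set

/-!
If `f'' (a) > 0` somewhere, monotonicity of `f''` gives `f'' ≥ f'' (a) > 0` on `[a, ∞)`, and two
integrations (with `f' (a) ≥ 0`) give `f x ≥ f a + f'' (a) / 2 * (x - a) ^ 2`. Otherwise `f'' ≤ 0`,
so `f'` is antitone and `f 0 ≤ f x ≤ f 0 + f' (0) * x` for `x ≥ 0`.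
-/

lemma taylor_quadratic_le_of_le_deriv_deriv {f : ℝ → ℝ} (hf : Differentiable ℝ f)
    (hf' : Differentiable ℝ (deriv f)) {a c : ℝ} (hc : ∀ x ≥ a, c ≤ deriv (deriv f) x) :
    ∀ x ≥ a, f a + deriv f a * (x - a) + c / 2 * (x - a) ^ 2 ≤ f x := by
  have hderiv : ∀ x ≥ a, deriv f a + c * (x - a) ≤ deriv f x := fun x hx => by
    have := (convex_Ici a).mul_sub_le_image_sub_of_le_deriv hf'.continuous.continuousOn
      hf'.differentiableOn (fun y hy => hc y (le_of_lt (by simpa using hy)))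
      a self_mem_Ici x hx hx
    linarith
  set g : ℝ → ℝ := fun x => f x - c / 2 * (x - a) ^ 2
  have hg : ∀ x, HasDerivAt g (deriv f x - c * (x - a)) x := fun x => by
    refine ((hf x).hasDerivAt.fun_sub ((((hasDerivAt_id' x).sub_const a).fun_pow 2).const_mul
      (c / 2))).congr_deriv ?_
    ring
  have hg_diff : Differentiable ℝ g := fun x => (hg x).differentiableAt
  intro x hx
  have := (convex_Ici a).mul_sub_le_image_sub_of_le_deriv hg_diff.continuous.continuousOn
    hg_diff.differentiableOn (C := deriv f a)
    (fun y hy => by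
      rw [(hg y).deriv]
      linarith [hderiv y (le_of_lt (by simpa using hy))])
    a self_mem_Ici x hx hx
  simp only [g, sub_self] at this
  linarith

lemma exists_pos_eventually_le_div_sq {f : ℝ → ℝ} {a b c : ℝ} (hc : 0 < c)
    (hf : ∀ x ≥ a, b + c * (x - a) ^ 2 ≤ f x) :
    ∃ c' > 0, ∀ᶠ x in atTop, c' ≤ f x / x ^ 2 := by
  have hlim : Tendsto (fun x : ℝ => b * x⁻¹ ^ 2 + c * (1 - a * x⁻¹) ^ 2) atTop (𝓝 c) := by
    have := ((tendsto_inv_atTop_zero.pow 2).const_mul b).add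
      (((tendsto_inv_atTop_zero.const_mul a).const_sub 1).pow 2 |>.const_mul c)
    simpa using this
  refine ⟨c / 2, half_pos hc, ?_⟩
  filter_upwards [hlim.eventually (lt_mem_nhds (half_lt_self hc)), eventually_gt_atTop 0,
    eventually_ge_atTop a] with x hlt hx0 hxa
  calc c / 2 ≤ b * x⁻¹ ^ 2 + c * (1 - a * x⁻¹) ^ 2 := hlt.le
    _ = (b + c * (x - a) ^ 2) / x ^ 2 := by field_simp
    _ ≤ f x / x ^ 2 := by gcongr; exact hf x hxa

lemma isBigO_id_of_monotone_of_antitone_deriv {f : ℝ → ℝ} (hf : Differentiable ℝ f)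
    (hmono : Monotone f) (hanti : Antitone (deriv f)) :
    f =O[atTop] fun x : ℝ => x := by
  have hsub : (fun x => f x - f 0) =O[atTop] fun x : ℝ => x := by
    refine IsBigO.of_bound (deriv f 0) ?_
    filter_upwards [eventually_ge_atTop 0] with x hx
    have hupper := (convex_Ici 0).image_sub_le_mul_sub_of_deriv_le hf.continuous.continuousOn
      hf.differentiableOn (fun y hy => hanti (le_of_lt (by simpa using hy)))
      0 self_mem_Ici x hx hx
    rw [Real.norm_of_nonneg (sub_nonneg.mpr (hmono hx)), Real.norm_of_nonneg hx]
    linarith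
  simpa using hsub.add (isLittleO_const_id_atTop (f 0)).isBigO

theorem F3_growth_dichotomy_general (f : ℝ → ℝ) (hf : ContDiff ℝ 2 f)
    (hmono : Monotone f)
    (hmono'' : Monotone (deriv (deriv f))) :
    (f =O[atTop] fun x : ℝ => x) ∨ ∃ c > 0, ∀ᶠ x in atTop, c ≤ f x / x ^ 2 := by
  have hf1 : Differentiable ℝ f := hf.differentiable (by norm_num)
  have hf2 : Differentiable ℝ (deriv f) :=
    (contDiff_succ_iff_deriv.mp (hf : ContDiff ℝ (1 + 1) f)).2.2.differentiable one_ne_zero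
  by_cases hpos : ∃ a, 0 < deriv (deriv f) a
  · obtain ⟨a, ha⟩ := hpos
    right
    refine exists_pos_eventually_le_div_sq (a := a) (b := f a) (half_pos ha) fun x hx => ?_
    have := taylor_quadratic_le_of_le_deriv_deriv hf1 hf2 (fun y hy => hmono'' hy) x hx
    nlinarith [hmono.deriv_nonneg (x := a), sub_nonneg.mpr hx]
  · push Not at hpos
    exact Or.inl <| isBigO_id_of_monotone_of_antitone_deriv hf1 hmono
      (antitone_of_deriv_nonpos hf2 hpos)

/-- If `f ∈ C²` with `f` and `f''` nondecreasing and convex, then either `f(x) = O(x)`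
as `x → +∞`, or `liminf f(x)/x² > 0` (possibly `+∞`), expressed as: eventually
`f(x)/x² ≥ c` for some `c > 0`. -/
theorem F3_growth_dichotomy (f : ℝ → ℝ) (hf : ContDiff ℝ 2 f)
    (hmono : Monotone f) (hconv : ConvexOn ℝ Set.univ f)
    (hmono'' : Monotone (deriv (deriv f)))
    (hconv'' : ConvexOn ℝ Set.univ (deriv (deriv f))) :
    (f =O[atTop] fun x : ℝ => x) ∨ ∃ c > 0, ∀ᶠ x in atTop, c ≤ f x / x ^ 2 :=
  F3_growth_dichotomy_general f hf hmono hmono''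
end
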